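/- Let I ⊂ R = k[x_0,...,x_N] be a homogeneous ideal such that R/I satisfies property N_{d,p} for some d ≥ 2 and p ≥ 1 (i.e., Tor_i^R(I,k) is concentrated in degrees ≤ i + d for 0 ≤ i ≤ p−1). Then, regarding I as a graded S-module with S = k[x_1,...,x_N], multiplication by x_0 induces a surjection Tor_i^S(I,k)_{i+j} → Tor_i^S(I,k)_{i+j+1} for all 0 ≤ i ≤ p−1 and j ≥ d, and an isomorphism for all 0 ≤ i ≤ p−2 and j ≥ d+1. -/

import Mathlib

open MvPolynomial

section Framework

variable {k : Type} [Field k]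

/-- Cast between components of a graded module along an equality of degrees. -/
def mcast {M : ℤ → Type} [∀ j, AddCommGroup (M j)] [∀ j, Module k (M j)]
    {j j' : ℤ} (h : j = j') : M j →ₗ[k] M j' := by subst h; exact LinearMap.id

variable (M : ℤ → Type) [∀ j, AddCommGroup (M j)] [∀ j, Module k (M j)]

/-- The `(i, D)`-term `⋀^i W ⊗ M_{D-i}` of the Koszul complex of the graded module `M`
over a polynomial ring in `n` variables, in internal (total) degree `D`; a basis element
of `⋀^i W` is an `i`-element subset of the variables. -/
abbrev KT (n : ℕ) (i D : ℤ) : Type :=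
  {T : Finset (Fin n) // (T.card : ℤ) = i} → M (D - i)

/-- Cast between Koszul terms along equalities of the indices. -/
def ktcast {n : ℕ} {i i' D D' : ℤ} (h : i = i') (h' : D = D') :
    KT M n i D →ₗ[k] KT M n i' D' := by subst h; subst h'; exact LinearMap.id

variable {n : ℕ} (a : ∀ _ : Fin n, ∀ j, M j →ₗ[k] M (j + 1))

/-- The Koszul differential. -/
noncomputable def kd (i D : ℤ) : KT M n i D →ₗ[k] KT M n (i - 1) D where
  toFun w T := ∑ s : Fin n,
    if h : s ∈ T.1 then 0
    else ((-1 : ℤ) ^ (T.1.filter (· < s)).card) •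
      (mcast (M := M) (k := k) (by ring) (a s (D - i) (w ⟨insert s T.1, by
        rw [Finset.card_insert_of_notMem h]; have := T.2; push_cast at this ⊢; omega⟩)))
  map_add' w w' := by
    funext T
    show _ = (_ : M (D - (i - 1))) + _
    rw [← Finset.sum_add_distrib]
    refine Finset.sum_congr rfl fun s _ => ?_
    split_ifs with h
    · simp
    · rw [Pi.add_apply, map_add, map_add, smul_add]
  map_smul' c w := by
    funext T
    simp only [RingHom.id_apply, Pi.smul_apply]
    rw [Finset.smul_sum]
    refine Finset.sum_congr rfl fun s _ => ?_
    split_ifs with h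
    · simp
    · show _ • (mcast _ ((a s (D - i)) ((c • w) _))) = _
      rw [Pi.smul_apply, map_smul, map_smul, smul_comm]

/-- The boundary submodule of the space of Koszul `i`-cycles. -/
noncomputable def kbdry (i D : ℤ) : Submodule k (LinearMap.ker (kd M a i D)) :=
  Submodule.comap (LinearMap.ker (kd M a i D)).subtype
    (LinearMap.range ((ktcast M (show i + 1 - 1 = i by ring) rfl).comp (kd M a (i + 1) D)))

/-- The internal-degree-`D` part of `Tor_i(M, k)` over the polynomial ring in `n`
variables, computed as Koszul homology:  `ker ∂_i / im ∂_{i+1}`. -/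
noncomputable def TorP (i D : ℤ) : Type :=
  LinearMap.ker (kd M a i D) ⧸ kbdry M a i D

noncomputable instance (i D : ℤ) : AddCommGroup (TorP M a i D) := by
  unfold TorP; infer_instance

noncomputable instance (i D : ℤ) : Module k (TorP M a i D) := by
  unfold TorP; infer_instance

/-- The projection from Koszul `i`-cycles onto the Tor homology module `TorP`. -/
noncomputable def torproj (i D : ℤ) : LinearMap.ker (kd M a i D) →ₗ[k] TorP M a i D :=
  (kbdry M a i D).mkQ

/-- The map on Koszul terms induced by a degree-one operator `b` on `M`
(e.g. multiplication by `x_0`); it raises the internal degree by one. -/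
noncomputable def ktmul (b : ∀ j, M j →ₗ[k] M (j + 1)) (i D : ℤ) :
    KT M n i D →ₗ[k] KT M n i (D + 1) where
  toFun w T := mcast (M := M) (k := k) (by ring) (b (D - i) (w T))
  map_add' w w' := by
    funext T
    show mcast (M := M) (k := k) (by ring) (b (D - i) ((w + w') T)) = _
    rw [Pi.add_apply, map_add, map_add]; rfl
  map_smul' c w := by
    funext T
    show mcast (M := M) (k := k) (by ring) (b (D - i) ((c • w) T)) = _
    rw [Pi.smul_apply, map_smul, map_smul]; rfl

end Framework

section IdealComp

variable {k : Type} [Field k] {m : ℕ}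

lemma hsup_eq (d : ℕ) :
    (⨆ (d' : ℕ) (_ : (d' : ℤ) = (d : ℤ)), homogeneousSubmodule (Fin m) k d')
      = homogeneousSubmodule (Fin m) k d := by
  apply le_antisymm
  · refine iSup_le fun d' => iSup_le fun h => ?_
    obtain rfl : d' = d := by exact_mod_cast h
    exact le_rfl
  · exact le_iSup_of_le d (le_iSup_of_le rfl le_rfl)

lemma mem_hsup_mul (s : Fin m) {x : MvPolynomial (Fin m) k} {j : ℤ}
    (hx : x ∈ ⨆ (d : ℕ) (_ : (d : ℤ) = j), homogeneousSubmodule (Fin m) k d) :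
    X s * x ∈ ⨆ (d : ℕ) (_ : (d : ℤ) = j + 1), homogeneousSubmodule (Fin m) k d := by
  rcases lt_or_ge j 0 with hj | hj
  · have hb : (⨆ (d : ℕ) (_ : (d : ℤ) = j), homogeneousSubmodule (Fin m) k d) = ⊥ := by
      apply le_antisymm _ bot_le
      exact iSup_le fun d => iSup_le fun hd => absurd hd (by omega)
    rw [hb, Submodule.mem_bot] at hx
    rw [hx, mul_zero]; exact zero_mem _
  · obtain ⟨d, rfl⟩ : ∃ d : ℕ, (d : ℤ) = j := ⟨j.toNat, by omega⟩
    rw [hsup_eq] at hx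
    have hc : ((d + 1 : ℕ) : ℤ) = (d : ℤ) + 1 := by push_cast; ring
    rw [← hc, hsup_eq]
    rw [mem_homogeneousSubmodule] at hx ⊢
    simpa [Nat.add_comm] using (isHomogeneous_X k s).mul hx

/-- The degree-`j` homogeneous component of an ideal, as a `k`-subspace. -/
noncomputable def comp (I : Ideal (MvPolynomial (Fin m) k)) (j : ℤ) :
    Submodule k (MvPolynomial (Fin m) k) :=
  (I.restrictScalars k) ⊓ (⨆ (d : ℕ) (_ : (d : ℤ) = j), homogeneousSubmodule (Fin m) k d)

/-- The degree-`j` component of `I`, as a type. -/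
abbrev Comp (I : Ideal (MvPolynomial (Fin m) k)) (j : ℤ) : Type := ↥(comp I j)

/-- Multiplication by the variable `X s`: the degree-one shifting action on components. -/
noncomputable def mulX (I : Ideal (MvPolynomial (Fin m) k)) (s : Fin m) (j : ℤ) :
    Comp I j →ₗ[k] Comp I (j + 1) where
  toFun f := ⟨X s * f.1, ⟨I.mul_mem_left _ f.2.1, mem_hsup_mul s f.2.2⟩⟩
  map_add' f g := by ext; simp [mul_add]
  map_smul' c f := by ext; simp [mul_smul_comm]

/-- The internal-degree-`D` part of `Tor_i(I, k)` of an ideal `I` over its own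
polynomial ring. -/
noncomputable abbrev TorI (I : Ideal (MvPolynomial (Fin m) k)) (i D : ℤ) :=
  TorP (fun j => Comp I j) (fun s j => mulX I s j) i D

end IdealComp

set_option maxHeartbeats 1000000
set_option synthInstance.maxHeartbeats 1000000

variable {k : Type} [Field k] {N : ℕ}

/-- The actions of the variables `x_1, …, x_N` of `S = k[x_1,…,x_N]` on the components of
an ideal `I ⊆ R = k[x_0,…,x_N]` regarded as a graded `S`-module. -/
noncomputable def actS (I : Ideal (MvPolynomial (Fin (N + 1)) k)) :
    ∀ _ : Fin N, ∀ j : ℤ, Comp I j →ₗ[k] Comp I (j + 1) :=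
  fun s j => mulX I s.succ j

/-- The internal-degree-`D` part of `Tor_i^S(I, k)`, where the ideal `I ⊆ R = k[x_0,…,x_N]`
is regarded as a (typically infinitely generated) graded `S`-module, `S = k[x_1,…,x_N]`. -/
noncomputable def TorSofR (I : Ideal (MvPolynomial (Fin (N + 1)) k)) (i D : ℤ) : Type :=
  TorP (fun j => Comp I j) (actS I) i D

noncomputable instance (I : Ideal (MvPolynomial (Fin (N + 1)) k)) (i D : ℤ) :
    AddCommGroup (TorSofR I i D) := by unfold TorSofR; infer_instance

noncomputable instance (I : Ideal (MvPolynomial (Fin (N + 1)) k)) (i D : ℤ) :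
    Module k (TorSofR I i D) := by unfold TorSofR; infer_instance

/-- The projection from `S`-Koszul cycles of `I` onto `Tor_i^S(I,k)_D`. -/
noncomputable def torSproj (I : Ideal (MvPolynomial (Fin (N + 1)) k)) (i D : ℤ) :
    LinearMap.ker (kd (fun j => Comp I j) (actS I) i D) →ₗ[k] TorSofR I i D :=
  torproj (fun j => Comp I j) (actS I) i D

/-- Multiplication by `x_0` on the `S`-Koszul terms of `I`. -/
noncomputable def x0K (I : Ideal (MvPolynomial (Fin (N + 1)) k)) (i D : ℤ) :
    KT (fun j => Comp I j) N i D →ₗ[k] KT (fun j => Comp I j) N i (D + 1) :=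
  ktmul (fun j => Comp I j) (fun j => mulX I 0 j) i D

section W4
variable {N : ℕ}

/-- Push a subset of `Fin N` into `Fin (N+1)` via `succ`. -/
def msucc (T : Finset (Fin N)) : Finset (Fin (N + 1)) :=
  T.map ⟨Fin.succ, Fin.succ_injective N⟩

/-- Pull back a subset of `Fin (N+1)` along `succ`. -/
noncomputable def psucc (T' : Finset (Fin (N + 1))) : Finset (Fin N) :=
  T'.preimage Fin.succ ((Fin.succ_injective N).injOn)

lemma zero_not_mem_msucc (T : Finset (Fin N)) : (0 : Fin (N + 1)) ∉ msucc T := by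
  simp only [msucc, Finset.mem_map, Function.Embedding.coeFn_mk]
  rintro ⟨t, -, ht⟩
  exact Fin.succ_ne_zero t ht

lemma mem_msucc {t : Fin N} {T : Finset (Fin N)} : t.succ ∈ msucc T ↔ t ∈ T := by
  simp only [msucc, Finset.mem_map, Function.Embedding.coeFn_mk]
  constructor
  · rintro ⟨u, hu, h⟩; rwa [← Fin.succ_injective N h]
  · exact fun h => ⟨t, h, rfl⟩

lemma card_msucc (T : Finset (Fin N)) : (msucc T).card = T.card := Finset.card_map _

lemma psucc_msucc (T : Finset (Fin N)) : psucc (msucc T) = T := by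
  ext t
  rw [psucc, Finset.mem_preimage, mem_msucc]

lemma msucc_psucc {T' : Finset (Fin (N + 1))} (h : (0 : Fin (N + 1)) ∉ T') :
    msucc (psucc T') = T' := by
  ext s
  rcases Fin.eq_zero_or_eq_succ s with rfl | ⟨t, rfl⟩
  · simp only [zero_not_mem_msucc, false_iff]; exact fun hs => h hs
  · rw [mem_msucc, psucc, Finset.mem_preimage]

lemma card_psucc {T' : Finset (Fin (N + 1))} (h : (0 : Fin (N + 1)) ∉ T') :
    (psucc T').card = T'.card := by
  conv_rhs => rw [← msucc_psucc h]
  rw [card_msucc]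

lemma msucc_insert (s : Fin N) (T : Finset (Fin N)) :
    msucc (insert s T) = insert s.succ (msucc T) := Finset.map_insert _ _ _

lemma filter_msucc_lt (s : Fin N) (T : Finset (Fin N)) :
    ((msucc T).filter (· < s.succ)).card = (T.filter (· < s)).card := by
  rw [msucc, Finset.filter_map, Finset.card_map]
  congr 1
  apply Finset.filter_congr
  intro t _
  simp only [Function.comp_apply, Function.Embedding.coeFn_mk, Fin.succ_lt_succ_iff]

lemma filter_insert0_lt (s : Fin N) (T : Finset (Fin N)) :
    (((insert (0 : Fin (N + 1)) (msucc T))).filter (· < s.succ)).card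
      = (T.filter (· < s)).card + 1 := by
  rw [Finset.filter_insert, if_pos (Fin.succ_pos s),
    Finset.card_insert_of_notMem (fun hc => zero_not_mem_msucc T (Finset.mem_of_mem_filter _ hc)),
    filter_msucc_lt]

lemma filter_lt_zero (T' : Finset (Fin (N + 1))) :
    (T'.filter (· < (0 : Fin (N + 1)))).card = 0 := by
  rw [Finset.card_eq_zero, Finset.filter_eq_empty_iff]
  intro t _
  exact (Fin.not_lt_zero t : ¬ t < 0)

lemma erase_zero_insert (T : Finset (Fin N)) :
    (insert (0 : Fin (N + 1)) (msucc T)).erase 0 = msucc T :=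
  Finset.erase_insert (zero_not_mem_msucc T)

end W4
section Work
variable {k : Type} [Field k] {N : ℕ} (I : Ideal (MvPolynomial (Fin (N + 1)) k))

lemma mcast_val {j j' : ℤ} (h : j = j') (x : Comp I j) :
    (mcast (M := fun j => Comp I j) (k := k) h x : MvPolynomial (Fin (N + 1)) k) = x := by
  subst h; rfl

lemma KT_apply_congr {n : ℕ} {i D : ℤ} (w : KT (fun j => Comp I j) n i D)
    {T T' : {T : Finset (Fin n) // (T.card : ℤ) = i}} (h : T.1 = T'.1) : w T = w T' := by
  rw [Subtype.ext h]

/-- insert into an indexing subset -/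
def tins {n : ℕ} {i i' : ℤ} (hi : i + 1 = i') (T : {T : Finset (Fin n) // (T.card : ℤ) = i})
    (s : Fin n) (h : s ∉ T.1) : {T : Finset (Fin n) // (T.card : ℤ) = i'} :=
  ⟨insert s T.1, by
    rw [Finset.card_insert_of_notMem h]; have := T.2; push_cast at this ⊢; omega⟩

lemma kd_apply_val {n : ℕ} (a : ∀ _ : Fin n, ∀ j : ℤ, Comp I j →ₗ[k] Comp I (j + 1))
    (v : Fin n → Fin (N + 1))
    (ha : ∀ s (j : ℤ) (f : Comp I j), (a s j f : MvPolynomial (Fin (N + 1)) k) = X (v s) * (f : MvPolynomial (Fin (N + 1)) k))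
    (i D : ℤ) (w : KT (fun j => Comp I j) n i D)
    (T : {T : Finset (Fin n) // (T.card : ℤ) = i - 1}) :
    (kd (fun j => Comp I j) a i D w T : MvPolynomial (Fin (N + 1)) k) =
      ∑ s : Fin n, if h : s ∈ T.1 then 0 else
        ((-1 : ℤ) ^ (T.1.filter (· < s)).card) •
          (X (v s) * (w (tins (by ring) T s h) : MvPolynomial (Fin (N + 1)) k)) := by
  show ((∑ s : Fin n, _ : Comp I (D - (i - 1))) : MvPolynomial (Fin (N + 1)) k) = _
  rw [AddSubmonoidClass.coe_finset_sum]
  refine Finset.sum_congr rfl fun s _ => ?_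
  split_ifs with h
  · simp
  · rw [AddSubgroupClass.coe_zsmul, mcast_val, ha]
    rfl

lemma ktcast_apply_val {n : ℕ} {i i' D D' : ℤ} (h : i = i') (h' : D = D')
    (w : KT (fun j => Comp I j) n i D) (T : {T : Finset (Fin n) // (T.card : ℤ) = i'})
    (T₀ : {T : Finset (Fin n) // (T.card : ℤ) = i}) (hT : T₀.1 = T.1) :
    (ktcast (k := k) (fun j => Comp I j) h h' w T : MvPolynomial (Fin (N + 1)) k) = w T₀ := by
  subst h h'
  exact congrArg _ (KT_apply_congr I w hT.symm)

lemma mem_ker_kd_iff {n : ℕ} (a : ∀ _ : Fin n, ∀ j : ℤ, Comp I j →ₗ[k] Comp I (j + 1))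
    (i D : ℤ) (w : KT (fun j => Comp I j) n i D) :
    w ∈ LinearMap.ker (kd (fun j => Comp I j) a i D) ↔
      ∀ T, (kd (fun j => Comp I j) a i D w T : MvPolynomial (Fin (N + 1)) k) = 0 := by
  rw [LinearMap.mem_ker]
  constructor
  · intro h T; rw [h]; rfl
  · intro h; funext T; exact Subtype.ext (h T)

end Work
section Work2
variable {k : Type} [Field k] {N : ℕ} (I : Ideal (MvPolynomial (Fin (N + 1)) k))

lemma KT_ext {n : ℕ} {i D : ℤ} {w w' : KT (fun j => Comp I j) n i D}
    (h : ∀ T, (w T : MvPolynomial (Fin (N + 1)) k) = w' T) : w = w' :=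
  funext fun T => Subtype.ext (h T)

lemma actS_val (s : Fin N) (j : ℤ) (f : Comp I j) :
    (actS I s j f : MvPolynomial (Fin (N + 1)) k) = X s.succ * (f : MvPolynomial (Fin (N + 1)) k) := rfl

lemma x0K_apply_val (i D : ℤ) (w : KT (fun j => Comp I j) N i D)
    (T : {T : Finset (Fin N) // (T.card : ℤ) = i}) :
    (x0K I i D w T : MvPolynomial (Fin (N + 1)) k) =
      X 0 * (w T : MvPolynomial (Fin (N + 1)) k) := by
  show (mcast (M := fun j => Comp I j) (k := k) (by ring) (mulX I 0 (D - i) (w T)) :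
    MvPolynomial (Fin (N + 1)) k) = _
  rw [mcast_val]; rfl

lemma kd_x0K_comm (i D : ℤ) (w : KT (fun j => Comp I j) N i D)
    (T : {T : Finset (Fin N) // (T.card : ℤ) = i - 1}) :
    (kd (fun j => Comp I j) (actS I) i (D + 1) (x0K I i D w) T : MvPolynomial (Fin (N + 1)) k)
      = X 0 * (kd (fun j => Comp I j) (actS I) i D w T : MvPolynomial (Fin (N + 1)) k) := by
  rw [kd_apply_val I (actS I) (fun s => s.succ) (fun s j f => rfl) i (D + 1) _ T,
      kd_apply_val I (actS I) (fun s => s.succ) (fun s j f => rfl) i D w T,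
      Finset.mul_sum]
  refine Finset.sum_congr rfl fun s _ => ?_
  split_ifs with h
  · rw [mul_zero]
  · rw [x0K_apply_val, mul_smul_comm, mul_left_comm]

lemma x0K_ker {i D : ℤ} {w : KT (fun j => Comp I j) N i D}
    (hw : w ∈ LinearMap.ker (kd (fun j => Comp I j) (actS I) i D)) :
    x0K I i D w ∈ LinearMap.ker (kd (fun j => Comp I j) (actS I) i (D + 1)) := by
  rw [mem_ker_kd_iff] at hw ⊢
  intro T; rw [kd_x0K_comm, hw T, mul_zero]

lemma mem_kbdry_iff {n : ℕ} (a : ∀ _ : Fin n, ∀ j : ℤ, Comp I j →ₗ[k] Comp I (j + 1))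
    (i D : ℤ) (z : KT (fun j => Comp I j) n i D)
    (hz : z ∈ LinearMap.ker (kd (fun j => Comp I j) a i D)) :
    (⟨z, hz⟩ : LinearMap.ker (kd (fun j => Comp I j) a i D))
        ∈ kbdry (fun j => Comp I j) a i D ↔
      ∃ w : KT (fun j => Comp I j) n (i + 1) D,
        ktcast (k := k) (fun j => Comp I j) (show i + 1 - 1 = i by ring) rfl
          (kd (fun j => Comp I j) a (i + 1) D w) = z := by
  rw [kbdry, Submodule.mem_comap, LinearMap.mem_range]
  simp only [LinearMap.comp_apply]
  rfl

noncomputable def x0ker (i D : ℤ) :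
    LinearMap.ker (kd (fun j => Comp I j) (actS I) i D) →ₗ[k]
      LinearMap.ker (kd (fun j => Comp I j) (actS I) i (D + 1)) :=
  (x0K I i D).restrict fun z hz => x0K_ker I hz

lemma torSproj_eq_zero_iff (i D : ℤ)
    (z : LinearMap.ker (kd (fun j => Comp I j) (actS I) i D)) :
    torSproj I i D z = 0 ↔ z ∈ kbdry (fun j => Comp I j) (actS I) i D :=
  Submodule.Quotient.mk_eq_zero _

lemma x0_bdry {i D : ℤ} {z : KT (fun j => Comp I j) N i D}
    (hz : z ∈ LinearMap.ker (kd (fun j => Comp I j) (actS I) i D))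
    (hb : (⟨z, hz⟩ : LinearMap.ker (kd (fun j => Comp I j) (actS I) i D))
        ∈ kbdry (fun j => Comp I j) (actS I) i D) :
    (⟨x0K I i D z, x0K_ker I hz⟩ :
        LinearMap.ker (kd (fun j => Comp I j) (actS I) i (D + 1)))
      ∈ kbdry (fun j => Comp I j) (actS I) i (D + 1) := by
  rw [mem_kbdry_iff] at hb ⊢
  obtain ⟨w, hw⟩ := hb
  refine ⟨x0K I (i + 1) D w, KT_ext I fun T => ?_⟩
  have hc : ((T.1.card : ℤ)) = i + 1 - 1 := by have := T.2; omega
  have e1 := ktcast_apply_val I (show i + 1 - 1 = i by ring) rfl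
    (kd (fun j => Comp I j) (actS I) (i + 1) (D + 1) (x0K I (i + 1) D w)) T ⟨T.1, hc⟩ rfl
  have e2 := kd_x0K_comm I (i + 1) D w ⟨T.1, hc⟩
  have e3 := ktcast_apply_val I (show i + 1 - 1 = i by ring) rfl
    (kd (fun j => Comp I j) (actS I) (i + 1) D w) T ⟨T.1, hc⟩ rfl
  have e4 := congrArg Subtype.val (congrFun hw T)
  have e5 := x0K_apply_val I i D z T
  rw [e1, e2, e5, ← e4, e3]

end Work2
section W3
variable {k : Type} [Field k] {N : ℕ} (I : Ideal (MvPolynomial (Fin (N + 1)) k))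

lemma kbdry_le_ker (i D : ℤ) :
    kbdry (fun j => Comp I j) (actS I) i D ≤
      LinearMap.ker ((torSproj I i (D + 1)).comp (x0ker I i D)) := fun z hb => by
  rw [LinearMap.mem_ker, LinearMap.comp_apply]
  obtain ⟨z, hz⟩ := z
  rw [torSproj_eq_zero_iff]
  exact x0_bdry I hz hb

noncomputable def phi (i D : ℤ) : TorSofR I i D →ₗ[k] TorSofR I i (D + 1) := by
  unfold TorSofR TorP
  exact Submodule.liftQ _ ((torSproj I i (D + 1)).comp (x0ker I i D)) (kbdry_le_ker I i D)
end W3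
section W3b
variable {k : Type} [Field k] {N : ℕ} (I : Ideal (MvPolynomial (Fin (N + 1)) k))
lemma phi_spec (i D : ℤ) (z : KT (fun j => Comp I j) N i D)
    (hz : z ∈ LinearMap.ker (kd (fun j => Comp I j) (actS I) i D))
    (hz' : x0K I i D z ∈ LinearMap.ker (kd (fun j => Comp I j) (actS I) i (D + 1))) :
    phi I i D (torSproj I i D ⟨z, hz⟩) = torSproj I i (D + 1) ⟨x0K I i D z, hz'⟩ := rfl
end W3b
section W5
variable {k : Type} [Field k] {N : ℕ} (I : Ideal (MvPolynomial (Fin (N + 1)) k))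

def tms {i i' : ℤ} (h : i = i') (T : {T : Finset (Fin N) // (T.card : ℤ) = i}) :
    {T : Finset (Fin (N + 1)) // (T.card : ℤ) = i'} :=
  ⟨msucc T.1, by rw [card_msucc]; have := T.2; omega⟩

def t0ms {i i' : ℤ} (h : i + 1 = i') (T : {T : Finset (Fin N) // (T.card : ℤ) = i}) :
    {T : Finset (Fin (N + 1)) // (T.card : ℤ) = i'} :=
  ⟨insert 0 (msucc T.1), by
    rw [Finset.card_insert_of_notMem (zero_not_mem_msucc T.1), card_msucc]
    have := T.2; push_cast; omega⟩

noncomputable def tps {i i' : ℤ} (h : i = i')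
    (T' : {T : Finset (Fin (N + 1)) // (T.card : ℤ) = i}) (h0 : (0 : Fin (N + 1)) ∉ T'.1) :
    {T : Finset (Fin N) // (T.card : ℤ) = i'} :=
  ⟨psucc T'.1, by rw [card_psucc h0]; have := T'.2; omega⟩

@[simp] lemma tms_val {i i' : ℤ} (h : i = i') (T : {T : Finset (Fin N) // (T.card : ℤ) = i}) :
    (tms h T).1 = msucc T.1 := rfl

@[simp] lemma t0ms_val {i i' : ℤ} (h : i + 1 = i')
    (T : {T : Finset (Fin N) // (T.card : ℤ) = i}) :
    (t0ms h T).1 = insert 0 (msucc T.1) := rfl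

@[simp] lemma tins_val {n : ℕ} {i i' : ℤ} (hi : i + 1 = i')
    (T : {T : Finset (Fin n) // (T.card : ℤ) = i}) (s : Fin n) (h : s ∉ T.1) :
    (tins hi T s h).1 = insert s T.1 := rfl

@[simp] lemma tps_val {i i' : ℤ} (h : i = i')
    (T' : {T : Finset (Fin (N + 1)) // (T.card : ℤ) = i}) (h0 : (0 : Fin (N + 1)) ∉ T'.1) :
    (tps h T' h0).1 = psucc T'.1 := rfl

/-- Part (I): value of the R-Koszul differential on an index set not containing 0. -/
lemma kdR_msucc (i D : ℤ) (W : KT (fun j => Comp I j) (N + 1) i D)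
    (T : {T : Finset (Fin N) // (T.card : ℤ) = i - 1}) :
    (kd (fun j => Comp I j) (fun s j => mulX I s j) i D W (tms rfl T) :
        MvPolynomial (Fin (N + 1)) k)
      = X 0 * (W (t0ms (by ring) T) : MvPolynomial (Fin (N + 1)) k)
        + ∑ s : Fin N, if h : s ∈ T.1 then 0 else
            ((-1 : ℤ) ^ (T.1.filter (· < s)).card) •
              (X s.succ * (W (tms (by ring) (tins (by ring) T s h)) :
                MvPolynomial (Fin (N + 1)) k)) := by
  rw [kd_apply_val I (fun s j => mulX I s j) (fun s => s) (fun s j f => rfl) i D W (tms rfl T),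
      Fin.sum_univ_succ]
  congr 1
  · rw [dif_neg (show (0 : Fin (N + 1)) ∉ (tms rfl T).1 from zero_not_mem_msucc T.1),
        show (((tms (i' := i - 1) rfl T).1).filter (· < (0 : Fin (N + 1)))).card = 0 from
          filter_lt_zero _, pow_zero, one_smul]
    rw [KT_apply_congr I W (show (tins (by ring) (tms rfl T) 0
      (zero_not_mem_msucc T.1)).1 = (t0ms (show i - 1 + 1 = i by ring) T).1 from rfl)]
  · refine Finset.sum_congr rfl fun s _ => ?_
    by_cases h : s ∈ T.1
    · rw [dif_pos (show s.succ ∈ (tms (i' := i - 1) rfl T).1 from mem_msucc.mpr h), dif_pos h]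
    · rw [dif_neg (show s.succ ∉ (tms (i' := i - 1) rfl T).1 from fun hc => h (mem_msucc.mp hc)),
          dif_neg h,
          show (((tms (i' := i - 1) rfl T).1).filter (· < s.succ)).card
            = (T.1.filter (· < s)).card from filter_msucc_lt s T.1,
          KT_apply_congr I W (show (tins (by ring) (tms rfl T) s.succ _).1
            = (tms (show i - 1 + 1 = i by ring) (tins (by ring) T s h)).1 from by
              rw [tins_val, tms_val, tms_val, tins_val, msucc_insert])]
      rfl

/-- Part (II): value of the R-Koszul differential on an index set containing 0. -/
lemma kdR_insert0 (i D : ℤ) (W : KT (fun j => Comp I j) (N + 1) i D)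
    (T : {T : Finset (Fin N) // (T.card : ℤ) = i - 2}) :
    (kd (fun j => Comp I j) (fun s j => mulX I s j) i D W
        (t0ms (show i - 2 + 1 = i - 1 by ring) T) : MvPolynomial (Fin (N + 1)) k)
      = - ∑ s : Fin N, if h : s ∈ T.1 then 0 else
            ((-1 : ℤ) ^ (T.1.filter (· < s)).card) •
              (X s.succ * (W (t0ms (show i - 1 + 1 = i by ring)
                  (tins (show i - 2 + 1 = i - 1 by ring) T s h)) :
                MvPolynomial (Fin (N + 1)) k)) := by
  rw [kd_apply_val I (fun s j => mulX I s j) (fun s => s) (fun s j f => rfl) i D W _,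
      Fin.sum_univ_succ]
  rw [dif_pos (show (0 : Fin (N + 1)) ∈ (t0ms (show i - 2 + 1 = i - 1 by ring) T).1 from
    Finset.mem_insert_self _ _), zero_add, ← Finset.sum_neg_distrib]
  refine Finset.sum_congr rfl fun s _ => ?_
  by_cases h : s ∈ T.1
  · rw [dif_pos (show s.succ ∈ (t0ms (show i - 2 + 1 = i - 1 by ring) T).1 from
      Finset.mem_insert_of_mem (mem_msucc.mpr h)), dif_pos h, neg_zero]
  · rw [dif_neg (show s.succ ∉ (t0ms (show i - 2 + 1 = i - 1 by ring) T).1 from by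
        rw [t0ms_val, Finset.mem_insert]
        push_neg
        exact ⟨Fin.succ_ne_zero s, fun hc => h (mem_msucc.mp hc)⟩),
      dif_neg h,
      show (((t0ms (show i - 2 + 1 = i - 1 by ring) T).1).filter (· < s.succ)).card
        = (T.1.filter (· < s)).card + 1 from filter_insert0_lt s T.1,
      pow_succ, mul_neg_one, neg_smul,
      KT_apply_congr I W (show (tins (by ring) (t0ms (show i - 2 + 1 = i - 1 by ring) T)
          s.succ _).1 = (t0ms (show i - 1 + 1 = i by ring) (tins (by ring) T s h)).1 from by
        rw [tins_val, t0ms_val, t0ms_val, tins_val, msucc_insert]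
        ext x; simp only [Finset.mem_insert]; tauto)]

end W5
section W6
variable {k : Type} [Field k] {N : ℕ} (I : Ideal (MvPolynomial (Fin (N + 1)) k))

lemma kdS_apply_val (i D : ℤ) (w : KT (fun j => Comp I j) N i D)
    (T : {T : Finset (Fin N) // (T.card : ℤ) = i - 1}) :
    (kd (fun j => Comp I j) (actS I) i D w T : MvPolynomial (Fin (N + 1)) k) =
      ∑ s : Fin N, if h : s ∈ T.1 then 0 else
        ((-1 : ℤ) ^ (T.1.filter (· < s)).card) •
          (X s.succ * (w (tins (by ring) T s h) : MvPolynomial (Fin (N + 1)) k)) :=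
  kd_apply_val I (actS I) (fun s => s.succ) (fun s j f => rfl) i D w T

lemma exists_W (i D : ℤ) (hss : Subsingleton (TorI I i D))
    (Y : KT (fun j => Comp I j) (N + 1) i D)
    (hY : Y ∈ LinearMap.ker (kd (fun j => Comp I j) (fun s j => mulX I s j) i D)) :
    ∃ W : KT (fun j => Comp I j) (N + 1) (i + 1) D,
      ktcast (k := k) (fun j => Comp I j) (show i + 1 - 1 = i by ring) rfl
        (kd (fun j => Comp I j) (fun s j => mulX I s j) (i + 1) D W) = Y := by
  rw [← mem_kbdry_iff]
  have h0 : torproj (fun j => Comp I j) (fun s j => mulX I s j) i D ⟨Y, hY⟩ = 0 :=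
    Subsingleton.elim _ _
  exact (Submodule.Quotient.mk_eq_zero _).mp h0

noncomputable def part0 {i D : ℤ} (W : KT (fun j => Comp I j) (N + 1) i D) :
    KT (fun j => Comp I j) N i D := fun T => W (tms rfl T)

noncomputable def part1 {i i' D D' : ℤ} (hi : i' + 1 = i) (hD : D - i = D' - i')
    (W : KT (fun j => Comp I j) (N + 1) i D) : KT (fun j => Comp I j) N i' D' :=
  fun T => mcast (M := fun j => Comp I j) (k := k) hD (W (t0ms hi T))

@[simp] lemma part0_val {i D : ℤ} (W : KT (fun j => Comp I j) (N + 1) i D)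
    (T : {T : Finset (Fin N) // (T.card : ℤ) = i}) :
    (part0 I W T : MvPolynomial (Fin (N + 1)) k) = W (tms rfl T) := rfl

@[simp] lemma part1_val {i i' D D' : ℤ} (hi : i' + 1 = i) (hD : D - i = D' - i')
    (W : KT (fun j => Comp I j) (N + 1) i D)
    (T : {T : Finset (Fin N) // (T.card : ℤ) = i'}) :
    (part1 I hi hD W T : MvPolynomial (Fin (N + 1)) k) = W (t0ms hi T) :=
  mcast_val I _ _

/-- Bridge (II): the S-differential of the `e₀`-component. -/
lemma bridge1 (i D : ℤ) (W : KT (fun j => Comp I j) (N + 1) (i + 1) (D + 1))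
    (T : {T : Finset (Fin N) // (T.card : ℤ) = i - 1}) :
    (kd (fun j => Comp I j) (actS I) i D
        (part1 I rfl (show D + 1 - (i + 1) = D - i by ring) W) T :
        MvPolynomial (Fin (N + 1)) k)
      = - (kd (fun j => Comp I j) (fun s j => mulX I s j) (i + 1) (D + 1) W
            (t0ms (show i - 1 + 1 = i + 1 - 1 by ring) ⟨T.1, by have := T.2; omega⟩) :
          MvPolynomial (Fin (N + 1)) k) := by
  have hB := kdR_insert0 I (i + 1) (D + 1) W ⟨T.1, by have := T.2; omega⟩
  rw [KT_apply_congr I (kd (fun j => Comp I j) (fun s j => mulX I s j) (i + 1) (D + 1) W)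
      (show (t0ms (show i - 1 + 1 = i + 1 - 1 by ring)
          (⟨T.1, by have := T.2; omega⟩ : {T : Finset (Fin N) // (T.card : ℤ) = i - 1})).1
        = (t0ms (show i + 1 - 2 + 1 = i + 1 - 1 by ring)
          (⟨T.1, by have := T.2; omega⟩ : {T : Finset (Fin N) // (T.card : ℤ) = i + 1 - 2})).1
        from rfl),
    hB, kdS_apply_val, neg_neg]
  refine Finset.sum_congr rfl fun s _ => ?_
  by_cases h : s ∈ T.1
  · rw [dif_pos h, dif_pos h]
  · rw [dif_neg h, dif_neg h, part1_val]
    rfl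

/-- Bridge (I): the R-differential on zero-free sets. -/
lemma bridge2 (i D : ℤ) (W : KT (fun j => Comp I j) (N + 1) (i + 1) (D + 1))
    (T : {T : Finset (Fin N) // (T.card : ℤ) = i}) :
    (kd (fun j => Comp I j) (fun s j => mulX I s j) (i + 1) (D + 1) W
        (tms (show i = i + 1 - 1 by omega) T) : MvPolynomial (Fin (N + 1)) k)
      = (x0K I i D (part1 I rfl (show D + 1 - (i + 1) = D - i by ring) W) T :
          MvPolynomial (Fin (N + 1)) k)
        + (kd (fun j => Comp I j) (actS I) (i + 1) (D + 1) (part0 I W)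
            ⟨T.1, by have := T.2; omega⟩ : MvPolynomial (Fin (N + 1)) k) := by
  rw [KT_apply_congr I (kd (fun j => Comp I j) (fun s j => mulX I s j) (i + 1) (D + 1) W)
      (show (tms (show i = i + 1 - 1 by omega) T).1
        = (tms rfl (⟨T.1, by have := T.2; omega⟩ :
            {T : Finset (Fin N) // (T.card : ℤ) = i + 1 - 1})).1 from rfl),
    kdR_msucc I (i + 1) (D + 1) W ⟨T.1, by have := T.2; omega⟩,
    kdS_apply_val, x0K_apply_val, part1_val]
  congr 1

end W6
section W7
variable {k : Type} [Field k] {N : ℕ} (I : Ideal (MvPolynomial (Fin (N + 1)) k))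

noncomputable def yext (i D : ℤ) (y : KT (fun j => Comp I j) N i D) :
    KT (fun j => Comp I j) (N + 1) i D := fun T' =>
  if h0 : (0 : Fin (N + 1)) ∈ T'.1 then 0 else y (tps rfl T' h0)

lemma yext_mem (i D : ℤ) (y : KT (fun j => Comp I j) N i D)
    (T' : {T : Finset (Fin (N + 1)) // (T.card : ℤ) = i}) (h0 : (0 : Fin (N + 1)) ∈ T'.1) :
    yext I i D y T' = 0 := dif_pos h0

lemma yext_not_mem (i D : ℤ) (y : KT (fun j => Comp I j) N i D)
    (T' : {T : Finset (Fin (N + 1)) // (T.card : ℤ) = i}) (h0 : (0 : Fin (N + 1)) ∉ T'.1) :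
    yext I i D y T' = y (tps rfl T' h0) := dif_neg h0

lemma yext_t0ms (i D : ℤ) (y : KT (fun j => Comp I j) N i D) {i'' : ℤ} (h : i'' + 1 = i)
    (T : {T : Finset (Fin N) // (T.card : ℤ) = i''}) :
    yext I i D y (t0ms h T) = 0 := dif_pos (Finset.mem_insert_self _ _)

lemma yext_tms (i D : ℤ) (y : KT (fun j => Comp I j) N i D) {i'' : ℤ} (h : i'' = i)
    (T : {T : Finset (Fin N) // (T.card : ℤ) = i''}) :
    (yext I i D y (tms h T) : MvPolynomial (Fin (N + 1)) k)
      = y ⟨T.1, by rw [T.2, h]⟩ := by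
  rw [yext_not_mem I i D y (tms h T) (zero_not_mem_msucc T.1)]
  exact congrArg _ (KT_apply_congr I y
    (show (tps rfl (tms h T) (zero_not_mem_msucc T.1)).1 = T.1 from by
      exact psucc_msucc T.1))

lemma yext_ker (i D : ℤ) (y : KT (fun j => Comp I j) N i D)
    (hy : y ∈ LinearMap.ker (kd (fun j => Comp I j) (actS I) i D)) :
    yext I i D y ∈ LinearMap.ker (kd (fun j => Comp I j) (fun s j => mulX I s j) i D) := by
  rw [mem_ker_kd_iff]
  intro T'
  by_cases h0 : (0 : Fin (N + 1)) ∈ T'.1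
  · have h2 : 0 < T'.1.card := Finset.card_pos.mpr ⟨0, h0⟩
    have h1 := T'.2
    have hc : ((psucc (T'.1.erase 0)).card : ℤ) = i - 2 := by
      rw [card_psucc (Finset.notMem_erase _ _), Finset.card_erase_of_mem h0]
      omega
    have hset : T'.1 = (t0ms (show i - 2 + 1 = i - 1 by ring)
        (⟨psucc (T'.1.erase 0), hc⟩ : {T : Finset (Fin N) // (T.card : ℤ) = i - 2})).1 := by
      rw [t0ms_val, msucc_psucc (Finset.notMem_erase _ _), Finset.insert_erase h0]
    rw [KT_apply_congr I
      (kd (fun j => Comp I j) (fun s j => mulX I s j) i D (yext I i D y)) hset,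
      kdR_insert0]
    simp [yext_t0ms]
  · have hset : T'.1 = (tms (rfl : i - 1 = i - 1) (tps rfl T' h0)).1 := by
      rw [tms_val, tps_val, msucc_psucc h0]
    rw [KT_apply_congr I
      (kd (fun j => Comp I j) (fun s j => mulX I s j) i D (yext I i D y)) hset,
      kdR_msucc]
    have hy' := (mem_ker_kd_iff I (actS I) i D y).mp hy (tps rfl T' h0)
    rw [kdS_apply_val] at hy'
    rw [yext_t0ms I i D y (show i - 1 + 1 = i by ring) (tps rfl T' h0),
      ZeroMemClass.coe_zero, mul_zero, zero_add]
    refine Eq.trans (Finset.sum_congr rfl fun s _ => ?_) hy'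
    by_cases h : s ∈ (tps rfl T' h0).1
    · rw [dif_pos h, dif_pos h]
    · rw [dif_neg h, dif_neg h, yext_tms]

lemma torSproj_surjective (i D : ℤ) : Function.Surjective (torSproj I i D) :=
  Submodule.mkQ_surjective _

lemma phi_surjective (i D : ℤ) (hss : Subsingleton (TorI I i (D + 1))) :
    Function.Surjective (phi I i D) := by
  intro c
  obtain ⟨⟨y, hy⟩, rfl⟩ := torSproj_surjective I i (D + 1) c
  obtain ⟨W, hW⟩ := exists_W I i (D + 1) hss (yext I i (D + 1) y) (yext_ker I i (D + 1) y hy)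
  set u := part1 I rfl (show D + 1 - (i + 1) = D - i by ring) W with hu_def
  have hWval : ∀ (T : {T : Finset (Fin (N + 1)) // (T.card : ℤ) = i})
      (T2 : {T : Finset (Fin (N + 1)) // (T.card : ℤ) = i + 1 - 1}), T2.1 = T.1 →
      (kd (fun j => Comp I j) (fun s j => mulX I s j) (i + 1) (D + 1) W T2 :
        MvPolynomial (Fin (N + 1)) k) = (yext I i (D + 1) y T : MvPolynomial (Fin (N + 1)) k) := by
    intro T T2 hT
    have h4 := congrArg Subtype.val (congrFun hW T)
    rw [ktcast_apply_val I (show i + 1 - 1 = i by ring) rfl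
      (kd (fun j => Comp I j) (fun s j => mulX I s j) (i + 1) (D + 1) W) T T2 hT] at h4
    exact h4
  have hu : u ∈ LinearMap.ker (kd (fun j => Comp I j) (actS I) i D) := by
    rw [mem_ker_kd_iff]
    intro T
    rw [hu_def, bridge1 I i D W T]
    have pf : (((insert (0 : Fin (N + 1)) (msucc T.1))).card : ℤ) = i := by
      rw [Finset.card_insert_of_notMem (zero_not_mem_msucc T.1), card_msucc]
      have := T.2; push_cast; omega
    rw [hWval ⟨insert 0 (msucc T.1), pf⟩
      (t0ms (show i - 1 + 1 = i + 1 - 1 by ring) ⟨T.1, by have := T.2; omega⟩) rfl,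
      yext_mem I i (D + 1) y _ (Finset.mem_insert_self _ _), ZeroMemClass.coe_zero, neg_zero]
  have hmem : (⟨y, hy⟩ - ⟨x0K I i D u, x0K_ker I hu⟩ :
      LinearMap.ker (kd (fun j => Comp I j) (actS I) i (D + 1)))
      ∈ kbdry (fun j => Comp I j) (actS I) i (D + 1) := by
    rw [show (⟨y, hy⟩ - ⟨x0K I i D u, x0K_ker I hu⟩ :
        LinearMap.ker (kd (fun j => Comp I j) (actS I) i (D + 1)))
      = ⟨y - x0K I i D u, sub_mem hy (x0K_ker I hu)⟩ from rfl, mem_kbdry_iff]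
    refine ⟨part0 I W, KT_ext I fun T => ?_⟩
    have pfm : ((msucc T.1).card : ℤ) = i := by rw [card_msucc]; exact T.2
    have e2 := bridge2 I i D W T
    have e3 := hWval ⟨msucc T.1, pfm⟩ (tms (show i = i + 1 - 1 by omega) T) rfl
    have e4 : (yext I i (D + 1) y ⟨msucc T.1, pfm⟩ : MvPolynomial (Fin (N + 1)) k)
        = (y T : MvPolynomial (Fin (N + 1)) k) := by
      rw [yext_not_mem I i (D + 1) y ⟨msucc T.1, pfm⟩ (zero_not_mem_msucc T.1)]
      exact congrArg _ (KT_apply_congr I y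
        (show (tps rfl (⟨msucc T.1, pfm⟩ : {T : Finset (Fin (N + 1)) // (T.card : ℤ) = i})
          (zero_not_mem_msucc T.1)).1 = T.1 from by rw [tps_val]; exact psucc_msucc T.1))
    rw [ktcast_apply_val I (show i + 1 - 1 = i by ring) rfl
      (kd (fun j => Comp I j) (actS I) (i + 1) (D + 1) (part0 I W)) T
      ⟨T.1, by have := T.2; omega⟩ rfl]
    simp only [Pi.sub_apply, AddSubgroupClass.coe_sub]
    linear_combination - e2 + e3 + e4
  refine ⟨torSproj I i D ⟨u, hu⟩, ?_⟩
  rw [phi_spec I i D u hu (x0K_ker I hu)]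
  exact (Submodule.Quotient.eq _).mpr hmem |>.symm
end W7
section W8
variable {k : Type} [Field k] {N : ℕ} (I : Ideal (MvPolynomial (Fin (N + 1)) k))

noncomputable def xiext (i D : ℤ) (z : KT (fun j => Comp I j) N i D)
    (w : KT (fun j => Comp I j) N (i + 1) (D + 1)) :
    KT (fun j => Comp I j) (N + 1) (i + 1) (D + 1) := fun T' =>
  if h0 : (0 : Fin (N + 1)) ∈ T'.1 then
    mcast (M := fun j => Comp I j) (k := k) (show D - i = D + 1 - (i + 1) by ring)
      (z ⟨psucc (T'.1.erase 0), by
        have h2 : 0 < T'.1.card := Finset.card_pos.mpr ⟨0, h0⟩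
        have h1 := T'.2
        rw [card_psucc (Finset.notMem_erase _ _), Finset.card_erase_of_mem h0]
        omega⟩)
  else - w (tps rfl T' h0)

lemma xiext_mem_val (i D : ℤ) (z : KT (fun j => Comp I j) N i D)
    (w : KT (fun j => Comp I j) N (i + 1) (D + 1))
    (T' : {T : Finset (Fin (N + 1)) // (T.card : ℤ) = i + 1})
    (h0 : (0 : Fin (N + 1)) ∈ T'.1)
    (hcard : (((psucc (T'.1.erase 0))).card : ℤ) = i) :
    (xiext I i D z w T' : MvPolynomial (Fin (N + 1)) k)
      = z ⟨psucc (T'.1.erase 0), hcard⟩ := by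
  simp only [xiext]
  rw [dif_pos h0, mcast_val]

lemma xiext_not_mem_val (i D : ℤ) (z : KT (fun j => Comp I j) N i D)
    (w : KT (fun j => Comp I j) N (i + 1) (D + 1))
    (T' : {T : Finset (Fin (N + 1)) // (T.card : ℤ) = i + 1})
    (h0 : (0 : Fin (N + 1)) ∉ T'.1) :
    (xiext I i D z w T' : MvPolynomial (Fin (N + 1)) k)
      = -(w (tps rfl T' h0) : MvPolynomial (Fin (N + 1)) k) := by
  simp only [xiext]
  rw [dif_neg h0, NegMemClass.coe_neg]

lemma xiext_part1 (i D : ℤ) (z : KT (fun j => Comp I j) N i D)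
    (w : KT (fun j => Comp I j) N (i + 1) (D + 1)) :
    part1 I rfl (show D + 1 - (i + 1) = D - i by ring) (xiext I i D z w) = z :=
  KT_ext I fun T => by
    have hcard : (((psucc (((t0ms (rfl : i + 1 = i + 1) T).1).erase 0))).card : ℤ) = i := by
      rw [t0ms_val, erase_zero_insert, psucc_msucc, T.2]
    rw [part1_val, xiext_mem_val I i D z w (t0ms rfl T) (Finset.mem_insert_self _ _) hcard]
    exact congrArg _ (KT_apply_congr I z
      (show psucc (((t0ms (rfl : i + 1 = i + 1) T).1).erase 0) = T.1 from by
        rw [t0ms_val, erase_zero_insert, psucc_msucc]))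

lemma xiext_part0 (i D : ℤ) (z : KT (fun j => Comp I j) N i D)
    (w : KT (fun j => Comp I j) N (i + 1) (D + 1)) :
    part0 I (xiext I i D z w) = -w :=
  KT_ext I fun T => by
    rw [part0_val, xiext_not_mem_val I i D z w _ (zero_not_mem_msucc T.1),
      Pi.neg_apply, NegMemClass.coe_neg, neg_inj]
    exact congrArg _ (KT_apply_congr I w
      (show (tps rfl (tms (rfl : i + 1 = i + 1) T) (zero_not_mem_msucc T.1)).1 = T.1 from by
        exact psucc_msucc T.1))

set_option maxHeartbeats 1000000 in
lemma xiext_ker (i D : ℤ) (z : KT (fun j => Comp I j) N i D)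
    (hz : z ∈ LinearMap.ker (kd (fun j => Comp I j) (actS I) i D))
    (w : KT (fun j => Comp I j) N (i + 1) (D + 1))
    (hwval : ∀ (T : {T : Finset (Fin N) // (T.card : ℤ) = i})
        (T2 : {T : Finset (Fin N) // (T.card : ℤ) = i + 1 - 1}), T2.1 = T.1 →
        (kd (fun j => Comp I j) (actS I) (i + 1) (D + 1) w T2 :
          MvPolynomial (Fin (N + 1)) k)
          = (x0K I i D z T : MvPolynomial (Fin (N + 1)) k)) :
    xiext I i D z w ∈ LinearMap.ker
        (kd (fun j => Comp I j) (fun s j => mulX I s j) (i + 1) (D + 1)) := by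
  rw [mem_ker_kd_iff]
  intro T''
  by_cases h0 : (0 : Fin (N + 1)) ∈ T''.1
  · have h2 : 0 < T''.1.card := Finset.card_pos.mpr ⟨0, h0⟩
    have h1 := T''.2
    have hc2 : ((psucc (T''.1.erase 0)).card : ℤ) = i - 1 := by
      rw [card_psucc (Finset.notMem_erase _ _), Finset.card_erase_of_mem h0]
      omega
    have hset : T''.1 = (t0ms (show i - 1 + 1 = i + 1 - 1 by ring)
        (⟨psucc (T''.1.erase 0), hc2⟩ :
          {T : Finset (Fin N) // (T.card : ℤ) = i - 1})).1 := by
      rw [t0ms_val, msucc_psucc (Finset.notMem_erase _ _), Finset.insert_erase h0]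
    rw [KT_apply_congr I (kd (fun j => Comp I j) (fun s j => mulX I s j) (i + 1) (D + 1)
      (xiext I i D z w)) hset]
    have hB := bridge1 I i D (xiext I i D z w) ⟨psucc (T''.1.erase 0), hc2⟩
    rw [xiext_part1 I i D z w] at hB
    have hz' := (mem_ker_kd_iff I (actS I) i D z).mp hz ⟨psucc (T''.1.erase 0), hc2⟩
    rw [hz'] at hB
    linear_combination hB
  · have hset : T''.1 = (tms (show i = i + 1 - 1 by omega)
        (tps (show i + 1 - 1 = i by omega) T'' h0)).1 := by
      rw [tms_val, tps_val, msucc_psucc h0]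
    rw [KT_apply_congr I (kd (fun j => Comp I j) (fun s j => mulX I s j) (i + 1) (D + 1)
      (xiext I i D z w)) hset,
      bridge2 I i D (xiext I i D z w) (tps (show i + 1 - 1 = i by omega) T'' h0),
      xiext_part1 I i D z w, xiext_part0 I i D z w]
    simp only [map_neg, Pi.neg_apply, NegMemClass.coe_neg]
    have := hwval (tps (show i + 1 - 1 = i by omega) T'' h0)
      ⟨(tps (show i + 1 - 1 = i by omega) T'' h0).1, by
        have := (tps (show i + 1 - 1 = i by omega) T'' h0).2; omega⟩ rfl
    linear_combination - this

set_option maxHeartbeats 1000000 in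
lemma z_bdry (i D : ℤ) (z : KT (fun j => Comp I j) N i D)
    (hz : z ∈ LinearMap.ker (kd (fun j => Comp I j) (actS I) i D))
    (w : KT (fun j => Comp I j) N (i + 1) (D + 1))
    (Om : KT (fun j => Comp I j) (N + 1) (i + 1 + 1) (D + 1))
    (hOmval : ∀ (T : {T : Finset (Fin (N + 1)) // (T.card : ℤ) = i + 1})
        (T2 : {T : Finset (Fin (N + 1)) // (T.card : ℤ) = i + 1 + 1 - 1}), T2.1 = T.1 →
        (kd (fun j => Comp I j) (fun s j => mulX I s j) (i + 1 + 1) (D + 1) Om T2 :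
          MvPolynomial (Fin (N + 1)) k)
          = (xiext I i D z w T : MvPolynomial (Fin (N + 1)) k)) :
    torSproj I i D ⟨z, hz⟩ = 0 := by
  rw [torSproj_eq_zero_iff, mem_kbdry_iff]
  refine ⟨-(part1 I rfl (show D + 1 - (i + 1 + 1) = D - (i + 1) by ring) Om),
    KT_ext I fun T => ?_⟩
  rw [ktcast_apply_val I (show i + 1 - 1 = i by ring) rfl
    (kd (fun j => Comp I j) (actS I) (i + 1) D
      (-(part1 I rfl (show D + 1 - (i + 1 + 1) = D - (i + 1) by ring) Om))) T
    ⟨T.1, by have := T.2; omega⟩ rfl]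
  simp only [map_neg, Pi.neg_apply, NegMemClass.coe_neg]
  have hB := bridge1 I (i + 1) D Om ⟨T.1, by have := T.2; omega⟩
  have pfc : (((insert (0 : Fin (N + 1)) (msucc T.1))).card : ℤ) = i + 1 := by
    rw [Finset.card_insert_of_notMem (zero_not_mem_msucc T.1), card_msucc]
    have := T.2; push_cast; omega
  have hO := hOmval ⟨insert 0 (msucc T.1), pfc⟩
    (t0ms (show i + 1 - 1 + 1 = i + 1 + 1 - 1 by ring)
      ⟨T.1, by have := T.2; omega⟩) rfl
  have hcard2 : ((psucc (((insert (0 : Fin (N + 1)) (msucc T.1))).erase 0)).card : ℤ)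
      = i := by rw [erase_zero_insert, psucc_msucc, T.2]
  have hXival : (xiext I i D z w
      (⟨insert 0 (msucc T.1), pfc⟩ :
        {T : Finset (Fin (N + 1)) // (T.card : ℤ) = i + 1}) :
      MvPolynomial (Fin (N + 1)) k) = (z T : MvPolynomial (Fin (N + 1)) k) := by
    rw [xiext_mem_val I i D z w (⟨insert 0 (msucc T.1), pfc⟩ :
      {T : Finset (Fin (N + 1)) // (T.card : ℤ) = i + 1}) (Finset.mem_insert_self _ _) hcard2]
    exact congrArg _ (KT_apply_congr I z
      (show psucc (((insert (0 : Fin (N + 1)) (msucc T.1))).erase 0) = T.1 from by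
        rw [erase_zero_insert, psucc_msucc]))
  linear_combination - hB + hO + hXival

set_option maxHeartbeats 1000000 in
lemma phi_injective (i D : ℤ) (hss : Subsingleton (TorI I (i + 1) (D + 1))) :
    Function.Injective (phi I i D) := by
  have key : ∀ c, phi I i D c = 0 → c = 0 := by
    intro c hc
    obtain ⟨⟨z, hz⟩, rfl⟩ := torSproj_surjective I i D c
    rw [phi_spec I i D z hz (x0K_ker I hz), torSproj_eq_zero_iff, mem_kbdry_iff] at hc
    obtain ⟨w, hw⟩ := hc
    have hwval : ∀ (T : {T : Finset (Fin N) // (T.card : ℤ) = i})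
        (T2 : {T : Finset (Fin N) // (T.card : ℤ) = i + 1 - 1}), T2.1 = T.1 →
        (kd (fun j => Comp I j) (actS I) (i + 1) (D + 1) w T2 :
          MvPolynomial (Fin (N + 1)) k)
          = (x0K I i D z T : MvPolynomial (Fin (N + 1)) k) := by
      intro T T2 hT
      have h4 := congrArg Subtype.val (congrFun hw T)
      rw [ktcast_apply_val I (show i + 1 - 1 = i by ring) rfl
        (kd (fun j => Comp I j) (actS I) (i + 1) (D + 1) w) T T2 hT] at h4
      exact h4
    obtain ⟨Om, hOm⟩ := exists_W I (i + 1) (D + 1) hss (xiext I i D z w)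
      (xiext_ker I i D z hz w hwval)
    have hOmval : ∀ (T : {T : Finset (Fin (N + 1)) // (T.card : ℤ) = i + 1})
        (T2 : {T : Finset (Fin (N + 1)) // (T.card : ℤ) = i + 1 + 1 - 1}), T2.1 = T.1 →
        (kd (fun j => Comp I j) (fun s j => mulX I s j) (i + 1 + 1) (D + 1) Om T2 :
          MvPolynomial (Fin (N + 1)) k)
          = (xiext I i D z w T : MvPolynomial (Fin (N + 1)) k) := by
      intro T T2 hT
      have h4 := congrArg Subtype.val (congrFun hOm T)
      rw [ktcast_apply_val I (show i + 1 + 1 - 1 = i + 1 by ring) rfl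
        (kd (fun j => Comp I j) (fun s j => mulX I s j) (i + 1 + 1) (D + 1) Om) T T2 hT] at h4
      exact h4
    exact z_bdry I i D z hz w Om hOmval
  intro a b hab
  have := key (a - b) (by rw [map_sub, hab, sub_self])
  exact sub_eq_zero.mp this
end W8

/-- Let `I ⊆ R = k[x_0,…,x_N]` be a homogeneous ideal such that `R/I`
satisfies property `N_{d,p}` (`d ≥ 2`, `p ≥ 1`), i.e. `Tor_i^R(I,k)_{i+j} = 0` for
`0 ≤ i ≤ p−1` and `j ≥ d+1`.  Then, regarding `I` as a graded `S`-module with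
`S = k[x_1,…,x_N]`, multiplication by `x_0` induces a surjection
`Tor_i^S(I,k)_{i+j} → Tor_i^S(I,k)_{i+j+1}` for `0 ≤ i ≤ p−1` and `j ≥ d`, and an
isomorphism for `0 ≤ i ≤ p−2` and `j ≥ d+1`. -/
theorem x0_multiplication_on_torS {d p : ℕ} (hd : 2 ≤ d) (hp : 1 ≤ p)
    (I : Ideal (MvPolynomial (Fin (N + 1)) k))
    (hhomog : ∀ f ∈ I, ∀ n : ℕ, MvPolynomial.homogeneousComponent n f ∈ I)
    (hNdp : ∀ i : ℕ, i + 1 ≤ p → ∀ j : ℤ, (d : ℤ) + 1 ≤ j →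
      Subsingleton (TorI I i ((i : ℤ) + j))) :
    (∀ i : ℕ, i + 1 ≤ p → ∀ j : ℤ, (d : ℤ) ≤ j →
      ∃ φ : TorSofR I i ((i : ℤ) + j) →ₗ[k] TorSofR I i ((i : ℤ) + j + 1),
        (∀ (z : KT (fun j' => Comp I j') N i ((i : ℤ) + j))
            (hz : z ∈ LinearMap.ker (kd (fun j' => Comp I j') (actS I) i ((i : ℤ) + j)))
            (hz' : x0K I i ((i : ℤ) + j) z ∈
              LinearMap.ker (kd (fun j' => Comp I j') (actS I) i ((i : ℤ) + j + 1))),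
          φ (torSproj I i ((i : ℤ) + j) ⟨z, hz⟩) =
            torSproj I i ((i : ℤ) + j + 1) ⟨x0K I i ((i : ℤ) + j) z, hz'⟩) ∧
        Function.Surjective φ) ∧
    (∀ i : ℕ, i + 2 ≤ p → ∀ j : ℤ, (d : ℤ) + 1 ≤ j →
      ∃ φ : TorSofR I i ((i : ℤ) + j) →ₗ[k] TorSofR I i ((i : ℤ) + j + 1),
        (∀ (z : KT (fun j' => Comp I j') N i ((i : ℤ) + j))
            (hz : z ∈ LinearMap.ker (kd (fun j' => Comp I j') (actS I) i ((i : ℤ) + j)))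
            (hz' : x0K I i ((i : ℤ) + j) z ∈
              LinearMap.ker (kd (fun j' => Comp I j') (actS I) i ((i : ℤ) + j + 1))),
          φ (torSproj I i ((i : ℤ) + j) ⟨z, hz⟩) =
            torSproj I i ((i : ℤ) + j + 1) ⟨x0K I i ((i : ℤ) + j) z, hz'⟩) ∧
        Function.Bijective φ) := by
  constructor
  · intro i hip j hj
    refine ⟨phi I i ((i : ℤ) + j),
      fun z hz hz' => phi_spec I i ((i : ℤ) + j) z hz hz', ?_⟩
    have hss := hNdp i hip (j + 1) (by omega)
    rw [show (i : ℤ) + (j + 1) = (i : ℤ) + j + 1 by ring] at hss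
    exact phi_surjective I i ((i : ℤ) + j) hss
  · intro i hip j hj
    refine ⟨phi I i ((i : ℤ) + j),
      fun z hz hz' => phi_spec I i ((i : ℤ) + j) z hz hz', ?_, ?_⟩
    · have hss := hNdp (i + 1) (by omega) j (by omega)
      rw [show ((i + 1 : ℕ) : ℤ) = (i : ℤ) + 1 by push_cast; ring] at hss
      rw [show (i : ℤ) + 1 + j = (i : ℤ) + j + 1 by ring] at hss
      exact phi_injective I i ((i : ℤ) + j) hss
    · have hss := hNdp i (by omega) (j + 1) (by omega)
      rw [show (i : ℤ) + (j + 1) = (i : ℤ) + j + 1 by ring] at hss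
      exact phi_surjective I i ((i : ℤ) + j) hss
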